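/- For a Lie algebra L over a field, there is a short exact sequence 0 → M(L) → L ∧ L → L² → 0, where the map L ∧ L → L² is the commutator map κ′ sending l ∧ l′ to [l, l′]. -/

import Mathlib

open LieAlgebra Matrix Module


open LieAlgebra

section ProdLie
variable {L M : Type*}

instance prodLieRing [LieRing L] [LieRing M] : LieRing (L × M) where
  bracket x y := (⁅x.1, y.1⁆, ⁅x.2, y.2⁆)
  add_lie x y z := by ext <;> simp [add_lie]
  lie_add x y z := by ext <;> simp [lie_add]
  lie_self x := by ext <;> simp
  leibniz_lie x y z := by ext <;> simp

@[simp] theorem prod_bracket_fst [LieRing L] [LieRing M] (x y : L × M) :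
    ⁅x, y⁆.1 = ⁅x.1, y.1⁆ := rfl
@[simp] theorem prod_bracket_snd [LieRing L] [LieRing M] (x y : L × M) :
    ⁅x, y⁆.2 = ⁅x.2, y.2⁆ := rfl

instance prodLieAlgebra (F : Type*) [CommRing F] [LieRing L] [LieRing M]
    [LieAlgebra F L] [LieAlgebra F M] : LieAlgebra F (L × M) where
  lie_smul t x y := by ext <;> simp
end ProdLie

section AbL
variable (F : Type*) [Field F]

/-- The abelian Lie algebra of dimension `k` over `F`. -/
def AbLie (k : ℕ) : Type _ := Fin k → F

instance (k : ℕ) : AddCommGroup (AbLie F k) := Pi.addCommGroup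
instance (k : ℕ) : Module F (AbLie F k) := Pi.module _ _ _

instance (k : ℕ) : LieRing (AbLie F k) where
  bracket _ _ := 0
  add_lie _ _ _ := (zero_add 0).symm
  lie_add _ _ _ := (zero_add 0).symm
  lie_self _ := rfl
  leibniz_lie _ _ _ := (zero_add 0).symm

instance (k : ℕ) : LieAlgebra F (AbLie F k) where
  lie_smul t x y := (smul_zero t).symm

instance (k : ℕ) : FiniteDimensional F (AbLie F k) :=
  (inferInstance : FiniteDimensional F (Fin k → F))

instance (k : ℕ) : IsLieAbelian (AbLie F k) := ⟨fun _ _ => rfl⟩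
end AbL
open Matrix
section Heis
variable (F : Type*) [Field F]

/-- The Heisenberg Lie algebra `H(m)` of dimension `2m+1`. -/
def Heis (m : ℕ) : Type _ := (Fin m → F) × (Fin m → F) × F

instance (m : ℕ) : AddCommGroup (Heis F m) := Prod.instAddCommGroup
instance (m : ℕ) : Module F (Heis F m) := Prod.instModule

instance (m : ℕ) : LieRing (Heis F m) where
  bracket x y := (0, 0, x.1 ⬝ᵥ y.2.1 - y.1 ⬝ᵥ x.2.1)
  add_lie x y z := by
    refine Prod.ext ?_ (Prod.ext ?_ ?_)
    · show (0 : Fin m → F) = 0 + 0; rw [add_zero]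
    · show (0 : Fin m → F) = 0 + 0; rw [add_zero]
    · show (x.1 + y.1) ⬝ᵥ z.2.1 - z.1 ⬝ᵥ (x.2.1 + y.2.1) =
        (x.1 ⬝ᵥ z.2.1 - z.1 ⬝ᵥ x.2.1) + (y.1 ⬝ᵥ z.2.1 - z.1 ⬝ᵥ y.2.1)
      rw [add_dotProduct, dotProduct_add]; ring
  lie_add x y z := by
    refine Prod.ext ?_ (Prod.ext ?_ ?_)
    · show (0 : Fin m → F) = 0 + 0; rw [add_zero]
    · show (0 : Fin m → F) = 0 + 0; rw [add_zero]
    · show x.1 ⬝ᵥ (y.2.1 + z.2.1) - (y.1 + z.1) ⬝ᵥ x.2.1 =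
        (x.1 ⬝ᵥ y.2.1 - y.1 ⬝ᵥ x.2.1) + (x.1 ⬝ᵥ z.2.1 - z.1 ⬝ᵥ x.2.1)
      rw [add_dotProduct, dotProduct_add]; ring
  lie_self x := by
    refine Prod.ext rfl (Prod.ext rfl ?_)
    show x.1 ⬝ᵥ x.2.1 - x.1 ⬝ᵥ x.2.1 = 0
    ring
  leibniz_lie x y z := by
    refine Prod.ext ?_ (Prod.ext ?_ ?_)
    · show (0 : Fin m → F) = 0 + 0; rw [add_zero]
    · show (0 : Fin m → F) = 0 + 0; rw [add_zero]
    · show x.1 ⬝ᵥ (0 : Fin m → F) - (0 : Fin m → F) ⬝ᵥ x.2.1 =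
        ((0 : Fin m → F) ⬝ᵥ z.2.1 - z.1 ⬝ᵥ (0 : Fin m → F)) +
          (y.1 ⬝ᵥ (0 : Fin m → F) - (0 : Fin m → F) ⬝ᵥ y.2.1)
      simp

instance (m : ℕ) : LieAlgebra F (Heis F m) where
  lie_smul t x y := by
    refine Prod.ext ?_ (Prod.ext ?_ ?_)
    · show (0 : Fin m → F) = t • 0; rw [smul_zero]
    · show (0 : Fin m → F) = t • 0; rw [smul_zero]
    · show x.1 ⬝ᵥ (t • y.2.1) - (t • y.1) ⬝ᵥ x.2.1 = t • (x.1 ⬝ᵥ y.2.1 - y.1 ⬝ᵥ x.2.1)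
      rw [dotProduct_smul, smul_dotProduct, smul_sub]

instance (m : ℕ) : FiniteDimensional F (Heis F m) :=
  (inferInstance : FiniteDimensional F ((Fin m → F) × (Fin m → F) × F))
end Heis
open LieAlgebra

universe u v

section Functors
variable (F : Type u) [Field F] (L : Type v) [LieRing L] [LieAlgebra F L]

/-- The canonical free presentation `FreeLieAlgebra F L → L`. -/
noncomputable def presHom : FreeLieAlgebra F L →ₗ⁅F⁆ L := FreeLieAlgebra.lift F id

/-- The relation ideal `R` of the canonical free presentation. -/
noncomputable def presKer : LieIdeal F (FreeLieAlgebra F L) := (presHom F L).ker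

/-- The Schur multiplier `M(L) = (R ∩ F²)/[R,F]` of a Lie algebra. -/
noncomputable abbrev Multiplier : Type (max u v) :=
  ↥((presKer F L ⊓ derivedSeries F (FreeLieAlgebra F L) 1).toSubmodule) ⧸
    (Submodule.comap
      ((presKer F L ⊓ derivedSeries F (FreeLieAlgebra F L) 1).toSubmodule).subtype
      (⁅presKer F L, (⊤ : LieIdeal F (FreeLieAlgebra F L))⁆ : LieIdeal F (FreeLieAlgebra F L)).toSubmodule)


/-- Relations defining the nonabelian tensor square. -/
def tensorRel : Set (FreeLieAlgebra F (L × L)) :=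
  letI e : L × L → FreeLieAlgebra F (L × L) := FreeLieAlgebra.of F
  { x | (∃ (c : F) (a b : L), x = e (c • a, b) - c • e (a, b)) ∨
        (∃ (c : F) (a b : L), x = e (a, c • b) - c • e (a, b)) ∨
        (∃ a a' b : L, x = e (a + a', b) - e (a, b) - e (a', b)) ∨
        (∃ a b b' : L, x = e (a, b + b') - e (a, b) - e (a, b')) ∨
        (∃ a a' b : L, x = e (⁅a, a'⁆, b) - e (a, ⁅a', b⁆) + e (a', ⁅a, b⁆)) ∨
        (∃ a b b' : L, x = e (a, ⁅b, b'⁆) - e (⁅b', a⁆, b) + e (⁅b, a⁆, b')) ∨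
        (∃ a b a' b' : L, x = ⁅e (a, b), e (a', b')⁆ + e (⁅b, a⁆, ⁅a', b'⁆)) }

/-- The nonabelian tensor square `L ⊗ L`. -/
abbrev NTensor : Type (max u v) :=
  FreeLieAlgebra F (L × L) ⧸ LieSubmodule.lieSpan F (FreeLieAlgebra F (L × L)) (tensorRel F L)


/-- The generator `a ⊗ b` of the nonabelian tensor square. -/
noncomputable def tmk (a b : L) : NTensor F L :=
  LieSubmodule.Quotient.mk (N := LieSubmodule.lieSpan F (FreeLieAlgebra F (L × L)) (tensorRel F L))
    (FreeLieAlgebra.of F (a, b))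

/-- The square `L □ L`, i.e. the subalgebra of `L ⊗ L` generated by the elements `a ⊗ a`. -/
noncomputable def SqSub : LieSubalgebra F (NTensor F L) :=
  LieSubalgebra.lieSpan F _ { x | ∃ a : L, x = tmk F L a a }

/-- The ideal of `L ⊗ L` generated by the elements `a ⊗ a`. -/
noncomputable def sqIdeal : LieIdeal F (NTensor F L) :=
  LieSubmodule.lieSpan F _ { x | ∃ a : L, x = tmk F L a a }

/-- The exterior square `L ∧ L`. -/
noncomputable abbrev ExtSq : Type (max u v) := NTensor F L ⧸ sqIdeal F L


/-- The generator `a ∧ b` of the exterior square. -/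
noncomputable def wmk (a b : L) : ExtSq F L :=
  LieSubmodule.Quotient.mk (N := sqIdeal F L) (tmk F L a b)

/-- The exterior center `Z^∧(L)`. -/
noncomputable def extCenter : Set L := { x : L | ∀ l : L, wmk F L x l = 0 }

/-- A Lie algebra is capable if it is isomorphic to `H/Z(H)` for some Lie algebra `H`. -/
def Capable : Prop :=
  ∃ (H : Type (max u v)) (_ : LieRing H) (_ : LieAlgebra F H),
    Nonempty ((H ⧸ LieAlgebra.center F H) ≃ₗ⁅F⁆ L)

/-- The corank `t(L)` of an `n`-dimensional nilpotent Lie algebra. -/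
noncomputable def corank : ℕ :=
  Module.finrank F L * (Module.finrank F L - 1) / 2 - Module.finrank F (Multiplier F L)

/-- The abelianization of `L` (as an `F`-module). -/
noncomputable abbrev AbQuot : Type v := L ⧸ derivedSeries F L 1

end Functors

/-!
For a central extension `g : K → L` the bracket `⁅u, v⁆` of `K` only depends on `g u` and `g v`,
so it descends to a Lie algebra map `L ∧ L → K` sending `g u ∧ g v` to `⁅u, v⁆`. For `g = id` this
is the commutator map `κ`; its image is `L²` because `L ∧ L` is spanned by the wedges.

For the kernel take the canonical presentation `π : F → L`, `R = ker π`. Since `F/[R,F] → L` is a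
central extension, there is `Φ : L ∧ L → F/[R,F]` with `Φ (π x ∧ π y) = [x, y]`. In the other
direction, `(a, b) ↦ a ∧ b` is a 2-cocycle on `L` with trivial coefficients; pulled back to the
free Lie algebra `F` it becomes a coboundary, i.e. there is a linear `ρ : F → L ∧ L` with
`ρ [x, y] = π x ∧ π y`. On `F²` we get `Φ ∘ ρ = mk` and `κ ∘ ρ = π`, while `ρ` kills `[R, F]` and
maps `F²` onto `L ∧ L`; hence `ρ` induces `(R ∩ F²)/[R, F] ≃ ker κ`.
-/

namespace LieIdeal

variable {R : Type*} [CommRing R] {K M : Type*} [LieRing K] [LieAlgebra R K]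
  [LieRing M] [LieAlgebra R M]

def quotientMk (I : LieIdeal R K) : K →ₗ⁅R⁆ K ⧸ I :=
  { I.toSubmodule.mkQ with map_lie' := rfl }

@[simp] theorem quotientMk_apply (I : LieIdeal R K) (x : K) :
    quotientMk I x = LieSubmodule.Quotient.mk x := rfl

def quotientLift (I : LieIdeal R K) (f : K →ₗ⁅R⁆ M) (h : I ≤ f.ker) : K ⧸ I →ₗ⁅R⁆ M :=
  { I.toSubmodule.liftQ f.toLinearMap h with
    map_lie' := fun {x y} => Quotient.inductionOn₂' x y fun x y => f.map_lie x y }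

@[simp] theorem quotientLift_mk (I : LieIdeal R K) (f : K →ₗ⁅R⁆ M) (h : I ≤ f.ker) (x : K) :
    quotientLift I f h (LieSubmodule.Quotient.mk x) = f x := rfl

end LieIdeal

namespace LieSubalgebra

variable {R : Type*} [CommRing R] {K : Type*} [LieRing K] [LieAlgebra R K]

theorem coe_lieSpan_eq_span_of_forall_lie_mem {s : Set K}
    (hs : ∀ᵉ (x ∈ s) (y ∈ s), ⁅x, y⁆ ∈ s) :
    (lieSpan R K s : Submodule R K) = Submodule.span R s := by
  suffices ∀ {x y}, x ∈ Submodule.span R s → y ∈ Submodule.span R s →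
      ⁅x, y⁆ ∈ Submodule.span R s by
    refine le_antisymm ?_ submodule_span_le_lieSpan
    change _ ≤ ({ Submodule.span R s with lie_mem' := this } : LieSubalgebra R K)
    rw [lieSpan_le]
    exact Submodule.subset_span
  intro x y hx hy
  induction hx, hy using Submodule.span_induction₂ with
  | mem_mem x y hx hy => exact Submodule.subset_span (hs x hx y hy)
  | zero_left y hy => simp
  | zero_right x hx => simp
  | add_left x y z _ _ _ hx hy => simpa [add_lie] using add_mem hx hy
  | add_right x y z _ _ _ hx hy => simpa [lie_add] using add_mem hx hy
  | smul_left r x y _ _ h => simpa [smul_lie] using Submodule.smul_mem _ r h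
  | smul_right r x y _ _ h => simpa [lie_smul] using Submodule.smul_mem _ r h

end LieSubalgebra

namespace LieAlgebra

variable {R : Type*} [CommRing R] {K : Type*} [LieRing K] [LieAlgebra R K]

theorem mem_derivedSeries_one_iff_mem_span {z : K} :
    z ∈ derivedSeries R K 1 ↔ z ∈ Submodule.span R {⁅x, y⁆ | (x : K) (y : K)} := by
  rw [← coe_derivedSeries_one_eq]
  rfl

theorem lie_mem_derivedSeries_one (x y : K) : ⁅x, y⁆ ∈ derivedSeries R K 1 :=
  mem_derivedSeries_one_iff_mem_span.mpr <| Submodule.subset_span ⟨x, y, rfl⟩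

theorem _root_.LinearMap.eqOn_derivedSeries_one {M : Type*} [AddCommGroup M] [Module R M]
    {f g : K →ₗ[R] M} (h : ∀ x y : K, f ⁅x, y⁆ = g ⁅x, y⁆) {z : K}
    (hz : z ∈ derivedSeries R K 1) : f z = g z :=
  LinearMap.eqOn_span (by rintro _ ⟨x, y, rfl⟩; exact h x y)
    (mem_derivedSeries_one_iff_mem_span.mp hz)

end LieAlgebra

theorem FreeLieAlgebra.lieSpan_range_of (R X : Type*) [CommRing R] :
    LieSubalgebra.lieSpan R (FreeLieAlgebra R X) (Set.range (of R)) = ⊤ := by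
  let S := LieSubalgebra.lieSpan R (FreeLieAlgebra R X) (Set.range (of R))
  let ψ : FreeLieAlgebra R X →ₗ⁅R⁆ S :=
    lift R fun x => ⟨of R x, LieSubalgebra.subset_lieSpan (Set.mem_range_self x)⟩
  have hψ : S.incl.comp ψ = LieHom.id := hom_ext fun x => by simp [ψ]
  refine eq_top_iff.mpr fun z _ => ?_
  have hz : S.incl (ψ z) = z := DFunLike.congr_fun hψ z
  exact hz ▸ (ψ z).2

namespace LieAlgebra.ofTwoCocycle

open LieModule.Cohomology

variable {R : Type*} [CommRing R] {K M : Type*} [LieRing K] [LieAlgebra R K]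
  [AddCommGroup M] [Module R M] [LieRingModule K M] [LieModule R K M]
  (c : twoCocycle R K M)

def fstHom : ofTwoCocycle c →ₗ⁅R⁆ K where
  toFun x := ((ofProd c).symm x).1
  map_add' _ _ := rfl
  map_smul' _ _ := rfl
  map_lie' := rfl

@[simp] theorem fstHom_ofProd (p : K × M) : fstHom c (ofProd c p) = p.1 := rfl

def sndHom : ofTwoCocycle c →ₗ[R] M where
  toFun x := ((ofProd c).symm x).2
  map_add' _ _ := rfl
  map_smul' _ _ := rfl

theorem sndHom_lie [LieModule.IsTrivial K M] (x y : ofTwoCocycle c) :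
    sndHom c ⁅x, y⁆ = (c : K →ₗ[R] K →ₗ[R] M) (fstHom c x) (fstHom c y) := by
  simp only [bracket_ofTwoCocycle, trivial_lie_zero, add_zero, sub_zero]
  rfl

end LieAlgebra.ofTwoCocycle

namespace FreeLieAlgebra

open LieModule.Cohomology LieAlgebra.ofTwoCocycle

variable {R X : Type*} [CommRing R] {K M : Type*} [LieRing K] [LieAlgebra R K]
  [AddCommGroup M] [Module R M] [LieRingModule K M] [LieModule R K M] [LieModule.IsTrivial K M]

noncomputable def cocyclePrimitive (c : twoCocycle R K M) (π : FreeLieAlgebra R X →ₗ⁅R⁆ K) :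
    FreeLieAlgebra R X →ₗ[R] M :=
  sndHom c ∘ₗ (lift R fun x => ofProd c (π (of R x), 0) : _ →ₗ⁅R⁆ _).toLinearMap

theorem cocyclePrimitive_lie (c : twoCocycle R K M) (π : FreeLieAlgebra R X →ₗ⁅R⁆ K)
    (x y : FreeLieAlgebra R X) :
    cocyclePrimitive c π ⁅x, y⁆ = (c : K →ₗ[R] K →ₗ[R] M) (π x) (π y) := by
  have hfst : (fstHom c).comp (lift R fun x => ofProd c (π (of R x), 0)) = π :=
    hom_ext fun x => by simp
  simp only [cocyclePrimitive, LinearMap.comp_apply, LieHom.coe_toLinearMap, LieHom.map_lie,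
    sndHom_lie, ← LieHom.comp_apply, hfst]

end FreeLieAlgebra

section ExteriorSquare

variable (F : Type u) [Field F] (L : Type v) [LieRing L] [LieAlgebra F L]

noncomputable def toExtSq : FreeLieAlgebra F (L × L) →ₗ⁅F⁆ ExtSq F L :=
  (LieIdeal.quotientMk (sqIdeal F L)).comp (LieIdeal.quotientMk _)

theorem toExtSq_of (p : L × L) : toExtSq F L (FreeLieAlgebra.of F p) = wmk F L p.1 p.2 := rfl

theorem toExtSq_surjective : Function.Surjective (toExtSq F L) := by
  intro x
  obtain ⟨y, rfl⟩ := LieSubmodule.Quotient.surjective_mk' (sqIdeal F L) x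
  obtain ⟨z, rfl⟩ := LieSubmodule.Quotient.surjective_mk' _ y
  exact ⟨z, rfl⟩

theorem toExtSq_eq_zero_of_mem_tensorRel {x : FreeLieAlgebra F (L × L)}
    (hx : x ∈ tensorRel F L) : toExtSq F L x = 0 := by
  simp [toExtSq, LieSubmodule.Quotient.mk_eq_zero'.mpr (LieSubmodule.subset_lieSpan hx)]

variable {F L}

theorem wmk_smul_left (c : F) (a b : L) : wmk F L (c • a) b = c • wmk F L a b := by
  simpa [toExtSq_of, sub_eq_zero] using
    toExtSq_eq_zero_of_mem_tensorRel F L (Or.inl ⟨c, a, b, rfl⟩)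

theorem wmk_smul_right (c : F) (a b : L) : wmk F L a (c • b) = c • wmk F L a b := by
  simpa [toExtSq_of, sub_eq_zero] using
    toExtSq_eq_zero_of_mem_tensorRel F L (Or.inr <| Or.inl ⟨c, a, b, rfl⟩)

theorem wmk_add_left (a a' b : L) : wmk F L (a + a') b = wmk F L a b + wmk F L a' b := by
  simpa [toExtSq_of, sub_eq_zero, sub_sub] using
    toExtSq_eq_zero_of_mem_tensorRel F L (Or.inr <| Or.inr <| Or.inl ⟨a, a', b, rfl⟩)

theorem wmk_add_right (a b b' : L) : wmk F L a (b + b') = wmk F L a b + wmk F L a b' := by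
  simpa [toExtSq_of, sub_eq_zero, sub_sub] using
    toExtSq_eq_zero_of_mem_tensorRel F L (Or.inr <| Or.inr <| Or.inr <| Or.inl ⟨a, b, b', rfl⟩)

variable (F L) in
noncomputable def wedge : L →ₗ[F] L →ₗ[F] ExtSq F L :=
  LinearMap.mk₂ F (wmk F L) wmk_add_left wmk_smul_left wmk_add_right wmk_smul_right

@[simp] theorem wedge_apply (a b : L) : wedge F L a b = wmk F L a b := rfl

theorem wmk_self (a : L) : wmk F L a a = 0 :=
  LieSubmodule.Quotient.mk_eq_zero'.mpr (LieSubmodule.subset_lieSpan ⟨a, rfl⟩)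

theorem wmk_neg_left (a b : L) : wmk F L (-a) b = -wmk F L a b :=
  (wedge F L).map_neg₂ a b

theorem wmk_swap (a b : L) : wmk F L b a = -wmk F L a b := by
  have h := wmk_self (F := F) (a + b)
  rw [wmk_add_left, wmk_add_right, wmk_add_right, wmk_self, wmk_self, zero_add, add_zero] at h
  exact eq_neg_of_add_eq_zero_right h

theorem wmk_leibniz (a b c : L) :
    wmk F L a ⁅b, c⁆ = wmk F L ⁅a, b⁆ c + wmk F L b ⁅a, c⁆ := by
  have h := toExtSq_eq_zero_of_mem_tensorRel F L
    (Or.inr <| Or.inr <| Or.inr <| Or.inr <| Or.inr <| Or.inl ⟨a, b, c, rfl⟩)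
  simp only [map_add, map_sub, toExtSq_of] at h
  rw [← lie_skew c a, ← lie_skew b a, wmk_neg_left, wmk_neg_left, wmk_swap b ⁅a, c⁆] at h
  rw [← sub_eq_zero, ← h]
  abel

theorem lie_wmk_wmk (a b a' b' : L) :
    ⁅wmk F L a b, wmk F L a' b'⁆ = wmk F L ⁅a, b⁆ ⁅a', b'⁆ := by
  have h := toExtSq_eq_zero_of_mem_tensorRel F L
    (Or.inr <| Or.inr <| Or.inr <| Or.inr <| Or.inr <| Or.inr ⟨a, b, a', b', rfl⟩)
  simp only [map_add, LieHom.map_lie, toExtSq_of] at h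
  rwa [← lie_skew b a, wmk_neg_left, ← sub_eq_add_neg, sub_eq_zero] at h

variable (F L)

theorem span_wmk_eq_top :
    Submodule.span F (Set.range fun p : L × L => wmk F L p.1 p.2) = ⊤ := by
  have hW : (Set.range fun p : L × L => wmk F L p.1 p.2) =
      toExtSq F L '' Set.range (FreeLieAlgebra.of F) := by
    rw [← Set.range_comp]; rfl
  have hclosed : ∀ᵉ (x ∈ Set.range fun p : L × L => wmk F L p.1 p.2)
      (y ∈ Set.range fun p : L × L => wmk F L p.1 p.2),
      ⁅x, y⁆ ∈ Set.range fun p : L × L => wmk F L p.1 p.2 := by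
    rintro _ ⟨⟨a, b⟩, rfl⟩ _ ⟨⟨a', b'⟩, rfl⟩
    exact ⟨(⁅a, b⁆, ⁅a', b'⁆), (lie_wmk_wmk a b a' b').symm⟩
  rw [← LieSubalgebra.coe_lieSpan_eq_span_of_forall_lie_mem hclosed, hW,
    ← LieSubalgebra.map_lieSpan, FreeLieAlgebra.lieSpan_range_of, ← LieHom.range_eq_map,
    (LieHom.range_eq_top _).mpr (toExtSq_surjective F L)]
  rfl

open LieModule.Cohomology in
noncomputable def wedgeCocycle : twoCocycle F L (TrivialLieModule F L (ExtSq F L)) :=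
  ⟨⟨(wedge F L).compr₂ (TrivialLieModule.equiv F L (ExtSq F L)).symm.toLinearMap, wmk_self⟩,
    (mem_twoCocycle_iff_of_trivial F L _ _).mpr wmk_leibniz⟩

end ExteriorSquare

section CentralExtension

variable {F : Type u} [Field F] {L : Type v} [LieRing L] [LieAlgebra F L]
  {K : Type*} [LieRing K] [LieAlgebra F K] {g : K →ₗ⁅F⁆ L}

theorem lie_eq_lie_of_map_eq (hc : g.ker ≤ center F K) {u u' : K} (h : g u = g u') (w : K) :
    ⁅u, w⁆ = ⁅u', w⁆ := by
  have hker : u - u' ∈ g.ker := by rw [LieHom.mem_ker, map_sub, h, sub_self]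
  have hcomm := (LieModule.mem_maxTrivSubmodule F K K _).mp (hc hker) w
  rwa [← lie_skew, neg_eq_zero, sub_lie, sub_eq_zero] at hcomm

theorem lie_surjInv_map (hg : Function.Surjective g) (hc : g.ker ≤ center F K) (u v : K) :
    ⁅Function.surjInv hg (g u), Function.surjInv hg (g v)⁆ = ⁅u, v⁆ := by
  have hs : ∀ u, g (Function.surjInv hg (g u)) = g u := fun u => Function.surjInv_eq hg _
  rw [lie_eq_lie_of_map_eq hc (hs u), ← lie_skew, lie_eq_lie_of_map_eq hc (hs v), lie_skew]

variable (g) in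
noncomputable def freeCommutator (hg : Function.Surjective g) :
    FreeLieAlgebra F (L × L) →ₗ⁅F⁆ K :=
  FreeLieAlgebra.lift F fun p => ⁅Function.surjInv hg p.1, Function.surjInv hg p.2⁆

theorem freeCommutator_eq_zero_of_mem_tensorRel (hg : Function.Surjective g)
    (hc : g.ker ≤ center F K) {x : FreeLieAlgebra F (L × L)} (hx : x ∈ tensorRel F L) :
    freeCommutator g hg x = 0 := by
  have key : ∀ u v, freeCommutator g hg (FreeLieAlgebra.of F (g u, g v)) = ⁅u, v⁆ := by
    simp [freeCommutator, lie_surjInv_map hg hc]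
  rcases hx with ⟨c, a, b, rfl⟩ | ⟨c, a, b, rfl⟩ | ⟨a, a', b, rfl⟩ | ⟨a, b, b', rfl⟩ |
    ⟨a, a', b, rfl⟩ | ⟨a, b, b', rfl⟩ | ⟨a, b, a', b', rfl⟩
  · rcases hg a, hg b with ⟨⟨u, rfl⟩, ⟨v, rfl⟩⟩
    rw [← map_smul g c u, map_sub, map_smul (freeCommutator g hg), key, key, smul_lie,
      sub_self]
  · rcases hg a, hg b with ⟨⟨u, rfl⟩, ⟨v, rfl⟩⟩
    rw [← map_smul g c v, map_sub, map_smul (freeCommutator g hg), key, key, lie_smul,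
      sub_self]
  · rcases hg a, hg a', hg b with ⟨⟨u, rfl⟩, ⟨u', rfl⟩, ⟨v, rfl⟩⟩
    rw [← map_add g u u', map_sub, map_sub, key, key, key, add_lie, sub_sub, sub_self]
  · rcases hg a, hg b, hg b' with ⟨⟨u, rfl⟩, ⟨v, rfl⟩, ⟨v', rfl⟩⟩
    rw [← map_add g v v', map_sub, map_sub, key, key, key, lie_add, sub_sub, sub_self]
  · rcases hg a, hg a', hg b with ⟨⟨u, rfl⟩, ⟨u', rfl⟩, ⟨v, rfl⟩⟩
    rw [← g.map_lie, ← g.map_lie, ← g.map_lie, map_add, map_sub, key, key, key, lie_lie]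
    abel
  · rcases hg a, hg b, hg b' with ⟨⟨u, rfl⟩, ⟨v, rfl⟩, ⟨v', rfl⟩⟩
    rw [← g.map_lie, ← g.map_lie, ← g.map_lie, map_add, map_sub, key, key, key, leibniz_lie,
      ← lie_skew ⁅v', u⁆ v, ← lie_skew v' u, ← lie_skew v u, neg_lie, lie_neg]
    abel
  · rcases hg a, hg b, hg a', hg b' with ⟨⟨u, rfl⟩, ⟨v, rfl⟩, ⟨u', rfl⟩, ⟨v', rfl⟩⟩
    rw [← g.map_lie, ← g.map_lie, map_add, LieHom.map_lie, key, key, key, ← lie_skew v u,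
      neg_lie, add_neg_cancel]

variable (g) in
noncomputable def ExtSq.commutatorOfCentral (hg : Function.Surjective g)
    (hc : g.ker ≤ center F K) : ExtSq F L →ₗ⁅F⁆ K :=
  LieIdeal.quotientLift (sqIdeal F L)
    (LieIdeal.quotientLift _ (freeCommutator g hg) <| LieSubmodule.lieSpan_le.mpr fun _ hx =>
      LieHom.mem_ker.mpr (freeCommutator_eq_zero_of_mem_tensorRel hg hc hx))
    (LieSubmodule.lieSpan_le.mpr <| by
      rintro _ ⟨a, rfl⟩
      simp [tmk, freeCommutator])

theorem ExtSq.commutatorOfCentral_wmk (hg : Function.Surjective g) (hc : g.ker ≤ center F K)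
    (u v : K) :
    ExtSq.commutatorOfCentral g hg hc (wmk F L (g u) (g v)) = ⁅u, v⁆ := by
  simpa [ExtSq.commutatorOfCentral, wmk, tmk, freeCommutator] using lie_surjInv_map hg hc u v

end CentralExtension

section CommutatorMap

variable (F : Type u) [Field F] (L : Type v) [LieRing L] [LieAlgebra F L]

noncomputable def ExtSq.commutatorMap : ExtSq F L →ₗ⁅F⁆ L :=
  ExtSq.commutatorOfCentral LieHom.id Function.surjective_id fun z hz => by
    rw [show z = 0 from LieHom.mem_ker.mp hz]
    exact zero_mem _

variable {F L} in
theorem ExtSq.commutatorMap_wmk (a b : L) : ExtSq.commutatorMap F L (wmk F L a b) = ⁅a, b⁆ :=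
  ExtSq.commutatorOfCentral_wmk _ _ a b

theorem ExtSq.exists_commutatorMap_eq_iff (y : L) :
    (∃ x, ExtSq.commutatorMap F L x = y) ↔ y ∈ derivedSeries F L 1 := by
  have hrange : Submodule.map (ExtSq.commutatorMap F L).toLinearMap ⊤ =
      derivedSeries F L 1 := by
    rw [← span_wmk_eq_top, Submodule.map_span, ← Set.range_comp, coe_derivedSeries_one_eq]
    congr
    ext
    simp [ExtSq.commutatorMap_wmk]
  simpa using SetLike.ext_iff.mp hrange y

end CommutatorMap

section Presentation

variable (F : Type u) [Field F] (L : Type v) [LieRing L] [LieAlgebra F L]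

local notation "relBracket" => (⁅presKer F L, ⊤⁆ : LieIdeal F (FreeLieAlgebra F L))

theorem presHom_of (l : L) : presHom F L (FreeLieAlgebra.of F l) = l :=
  FreeLieAlgebra.lift_of_apply _ l

noncomputable def presHomQuot : FreeLieAlgebra F L ⧸ relBracket →ₗ⁅F⁆ L :=
  LieIdeal.quotientLift _ (presHom F L) (LieSubmodule.lie_le_left _ _)

theorem presHomQuot_surjective : Function.Surjective (presHomQuot F L) :=
  fun l => ⟨LieSubmodule.Quotient.mk (FreeLieAlgebra.of F l), presHom_of F L l⟩

theorem presHomQuot_ker_le_center : (presHomQuot F L).ker ≤ center F _ := by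
  intro u hu
  obtain ⟨z, rfl⟩ := LieSubmodule.Quotient.surjective_mk' _ u
  refine (LieModule.mem_maxTrivSubmodule F _ _ _).mpr fun w => ?_
  obtain ⟨w, rfl⟩ := LieSubmodule.Quotient.surjective_mk' _ w
  rw [LieSubmodule.Quotient.mk'_apply, LieSubmodule.Quotient.mk'_apply,
    ← LieSubmodule.Quotient.mk_bracket, LieSubmodule.Quotient.mk_eq_zero', ← lie_skew]
  exact neg_mem (LieSubmodule.lie_mem_lie hu (LieSubmodule.mem_top w))

noncomputable def bracketClass : ExtSq F L →ₗ⁅F⁆ FreeLieAlgebra F L ⧸ relBracket :=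
  ExtSq.commutatorOfCentral (presHomQuot F L) (presHomQuot_surjective F L)
    (presHomQuot_ker_le_center F L)

theorem bracketClass_wmk_presHom (x y : FreeLieAlgebra F L) :
    bracketClass F L (wmk F L (presHom F L x) (presHom F L y)) =
      LieSubmodule.Quotient.mk ⁅x, y⁆ :=
  ExtSq.commutatorOfCentral_wmk _ _ (LieSubmodule.Quotient.mk x) (LieSubmodule.Quotient.mk y)

noncomputable def wedgePrimitive : FreeLieAlgebra F L →ₗ[F] ExtSq F L :=
  (TrivialLieModule.equiv F L (ExtSq F L)).toLinearMap ∘ₗ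
    FreeLieAlgebra.cocyclePrimitive (wedgeCocycle F L) (presHom F L)

theorem wedgePrimitive_lie (x y : FreeLieAlgebra F L) :
    wedgePrimitive F L ⁅x, y⁆ = wmk F L (presHom F L x) (presHom F L y) :=
  congrArg (TrivialLieModule.equiv F L (ExtSq F L)) (FreeLieAlgebra.cocyclePrimitive_lie _ _ x y)

theorem bracketClass_wedgePrimitive {z : FreeLieAlgebra F L}
    (hz : z ∈ derivedSeries F (FreeLieAlgebra F L) 1) :
    bracketClass F L (wedgePrimitive F L z) = LieSubmodule.Quotient.mk z :=
  LinearMap.eqOn_derivedSeries_one (f := (bracketClass F L).toLinearMap ∘ₗ wedgePrimitive F L)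
    (g := (LieIdeal.quotientMk _).toLinearMap)
    (fun x y => by simp [wedgePrimitive_lie, bracketClass_wmk_presHom]) hz

theorem commutatorMap_wedgePrimitive {z : FreeLieAlgebra F L}
    (hz : z ∈ derivedSeries F (FreeLieAlgebra F L) 1) :
    ExtSq.commutatorMap F L (wedgePrimitive F L z) = presHom F L z :=
  LinearMap.eqOn_derivedSeries_one
    (f := (ExtSq.commutatorMap F L).toLinearMap ∘ₗ wedgePrimitive F L)
    (g := (presHom F L).toLinearMap)
    (fun x y => by simp [wedgePrimitive_lie, ExtSq.commutatorMap_wmk]) hz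

theorem wedgePrimitive_eq_zero_of_mem {z : FreeLieAlgebra F L} (hz : z ∈ relBracket) :
    wedgePrimitive F L z = 0 := by
  rw [← LieSubmodule.mem_toSubmodule, LieSubmodule.lieIdeal_oper_eq_linear_span'] at hz
  refine (Submodule.span_le (p := LinearMap.ker (wedgePrimitive F L))).mpr ?_ hz
  rintro _ ⟨x, hx, y, -, rfl⟩
  rw [SetLike.mem_coe, LinearMap.mem_ker, wedgePrimitive_lie, LieHom.mem_ker.mp hx,
    ← wedge_apply, LinearMap.map_zero₂]

theorem exists_wedgePrimitive_eq (w : ExtSq F L) :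
    ∃ z ∈ derivedSeries F (FreeLieAlgebra F L) 1, wedgePrimitive F L z = w := by
  have hspan : Submodule.span F (Set.range fun p : L × L => wmk F L p.1 p.2) ≤
      Submodule.map (wedgePrimitive F L) (derivedSeries F (FreeLieAlgebra F L) 1) := by
    rw [Submodule.span_le]
    rintro _ ⟨⟨a, b⟩, rfl⟩
    exact ⟨_, lie_mem_derivedSeries_one (FreeLieAlgebra.of F a) (FreeLieAlgebra.of F b),
      by simp [wedgePrimitive_lie, presHom_of]⟩
  rw [span_wmk_eq_top] at hspan
  simpa using hspan (Submodule.mem_top (x := w))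

noncomputable def multiplierToKer :
    ↥((presKer F L ⊓ derivedSeries F (FreeLieAlgebra F L) 1).toSubmodule) →ₗ[F]
      ↥(ExtSq.commutatorMap F L).ker :=
  LinearMap.codRestrict (ExtSq.commutatorMap F L).ker.toSubmodule
    (wedgePrimitive F L ∘ₗ Submodule.subtype _) fun z => by
      obtain ⟨hR, hD⟩ := (LieSubmodule.mem_inf _ _ _).mp z.2
      exact LieHom.mem_ker.mpr ((commutatorMap_wedgePrimitive F L hD).trans hR)

theorem ker_multiplierToKer :
    LinearMap.ker (multiplierToKer F L) =
      Submodule.comap (Submodule.subtype _) (relBracket).toSubmodule := by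
  ext z
  obtain ⟨-, hD⟩ := (LieSubmodule.mem_inf _ _ _).mp z.2
  rw [LinearMap.mem_ker, Submodule.mem_comap, ← Subtype.coe_inj]
  change wedgePrimitive F L z = 0 ↔ (z : FreeLieAlgebra F L) ∈ relBracket
  refine ⟨fun h => ?_, wedgePrimitive_eq_zero_of_mem F L⟩
  rw [← LieSubmodule.Quotient.mk_eq_zero', ← bracketClass_wedgePrimitive F L hD, h, map_zero]

theorem multiplierToKer_surjective : Function.Surjective (multiplierToKer F L) := by
  rintro ⟨w, hw⟩
  obtain ⟨z, hD, rfl⟩ := exists_wedgePrimitive_eq F L w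
  have hR : z ∈ presKer F L :=
    (commutatorMap_wedgePrimitive F L hD).symm.trans (LieHom.mem_ker.mp hw)
  exact ⟨⟨z, (LieSubmodule.mem_inf _ _ _).mpr ⟨hR, hD⟩⟩, rfl⟩

noncomputable def kerCommutatorMapEquivMultiplier :
    ↥(ExtSq.commutatorMap F L).ker ≃ₗ[F] Multiplier F L :=
  ((Submodule.quotEquivOfEq _ _ (ker_multiplierToKer F L).symm).trans
    ((multiplierToKer F L).quotKerEquivOfSurjective (multiplierToKer_surjective F L))).symm

end Presentation

/-- the short exact sequence `0 → M(L) → L ∧ L → L² → 0`. -/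
theorem multiplier_exterior_exact_sequence (F : Type u) [Field F]
    (L : Type u) [LieRing L] [LieAlgebra F L] :
    ∃ κ : ExtSq F L →ₗ⁅F⁆ L,
      (∀ a b : L, κ (wmk F L a b) = ⁅a, b⁆) ∧
      (∀ y : L, y ∈ derivedSeries F L 1 ↔ ∃ x, κ x = y) ∧
      Nonempty (↥(κ.ker) ≃ₗ[F] Multiplier F L) :=
  ⟨ExtSq.commutatorMap F L, ExtSq.commutatorMap_wmk,
    fun y => (ExtSq.exists_commutatorMap_eq_iff F L y).symm,
    ⟨kerCommutatorMapEquivMultiplier F L⟩⟩
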